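/- arXiv:2112.12407 — 3 statements merged into one kernel-verified Lean document; each statement's English description precedes it below -/
import Mathlib

section
/- Let M ≥ 2 be an even integer and let s_0, …, s_{M−1} ∈ ℝ^M be the rows of the modified DST matrix S. Then the Gram matrix SSᵀ satisfies: ⟨s_k, s_k⟩ = 1 for all k; ⟨s_0, s_{2ℓ+1}⟩ = √2/(M · sin((π/(2M))(2ℓ+1))) for every ℓ ∈ {0, …, M/2−1}; and ⟨s_{k}, s_{m}⟩ = 0 for all other pairs k ≠ m (i.e., whenever k, m ≥ 1 with k ≠ m, and whenever k = 0 and m ≥ 2 is even). -/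
/-- The `(k,n)` entry of the modified DST matrix `S ∈ ℝ^{M×M}` (row 0 replaced by the
constant row `√(1/M)`). -/
noncomputable def modDstEntry (M k n : ℕ) : ℝ :=
  if k = 0 then Real.sqrt (1 / M)
  else Real.sqrt (2 / M) * Real.sin (Real.pi / M * k * (n + 1 / 2))

/-!
By the product-to-sum formulas every inner product of two rows is a sum of `cos` or `sin` over the
half-integer grid `α (n + 1/2)`, `n < M`. Multiplied by `2 sin (α / 2)` such a sum telescopes, to
`sin (α M)` resp. `1 - cos (α M)`. For `α = π j / M` with `0 < |j| < 2M` the factor `sin (α / 2)`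
is nonzero while `sin (α M) = 0` and `cos (α M) = (-1)^j`: the cosine sums vanish, which makes the
sine rows orthonormal, and the sine sums (row 0 against row `j`) vanish exactly for even `j`.
-/

open Real Finset

theorem two_mul_sin_half_mul_sum_cos (α : ℝ) (M : ℕ) :
    2 * sin (α / 2) * ∑ n ∈ range M, cos (α * (n + 1 / 2)) = sin (α * M) := by
  have step (n : ℕ) :
      2 * sin (α / 2) * cos (α * (n + 1 / 2)) = sin (α * ↑(n + 1)) - sin (α * n) := by
    rw [two_mul_sin_mul_cos, show α / 2 - α * (n + 1 / 2) = -(α * n) by ring, sin_neg]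
    push_cast
    ring_nf
  rw [mul_sum, sum_congr rfl fun n _ => step n]
  simpa using sum_range_sub (fun n : ℕ => sin (α * n)) M

theorem two_mul_sin_half_mul_sum_sin (α : ℝ) (M : ℕ) :
    2 * sin (α / 2) * ∑ n ∈ range M, sin (α * (n + 1 / 2)) = 1 - cos (α * M) := by
  have step (n : ℕ) :
      2 * sin (α / 2) * sin (α * (n + 1 / 2)) = cos (α * n) - cos (α * ↑(n + 1)) := by
    rw [two_mul_sin_mul_sin, show α / 2 - α * (n + 1 / 2) = -(α * n) by ring, cos_neg]
    push_cast
    ring_nf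
  rw [mul_sum, sum_congr rfl fun n _ => step n]
  simpa using sum_range_sub' (fun n : ℕ => cos (α * n)) M

theorem sin_pi_mul_ne_zero_of_abs_lt_one {x : ℝ} (h0 : x ≠ 0) (h1 : |x| < 1) :
    sin (π * x) ≠ 0 := by
  obtain ⟨hlo, hhi⟩ := abs_lt.mp h1
  rw [Ne, sin_eq_zero_iff_of_lt_of_lt (by nlinarith [pi_pos]) (by nlinarith [pi_pos])]
  exact mul_ne_zero pi_ne_zero h0

theorem sin_pi_div_mul_half_ne_zero {M : ℕ} {j : ℤ} (hj0 : j ≠ 0) (hj : |j| < 2 * M) :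
    sin (π / M * j / 2) ≠ 0 := by
  have hM : (0 : ℝ) < M := by exact_mod_cast (show (0 : ℤ) < M by linarith [abs_nonneg j])
  have hjR : |(j : ℝ)| < 2 * M := by exact_mod_cast hj
  convert sin_pi_mul_ne_zero_of_abs_lt_one (x := j / (2 * M)) (by positivity) ?_ using 2
  · field_simp
  · rw [abs_div, abs_of_pos (by positivity : (0 : ℝ) < 2 * M), div_lt_one (by positivity)]
    exact hjR

theorem sum_cos_pi_div_mul_int {M : ℕ} {j : ℤ} (hj0 : j ≠ 0) (hj : |j| < 2 * M) :
    ∑ n ∈ range M, cos (π / M * j * (n + 1 / 2)) = 0 := by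
  have hM : (M : ℝ) ≠ 0 := by exact_mod_cast (show (M : ℤ) ≠ 0 by linarith [abs_nonneg j])
  have h := two_mul_sin_half_mul_sum_cos (π / M * j) M
  rw [show π / M * j * M = j * π by field_simp, sin_int_mul_pi] at h
  exact (mul_eq_zero.mp h).resolve_left
    (mul_ne_zero two_ne_zero (sin_pi_div_mul_half_ne_zero hj0 hj))

theorem sum_sin_pi_div_mul_nat {M m : ℕ} (hm0 : m ≠ 0) (hm : m < 2 * M) :
    ∑ n ∈ range M, sin (π / M * m * (n + 1 / 2)) =
      (1 - (-1) ^ m) / (2 * sin (π / M * m / 2)) := by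
  have hM : (M : ℝ) ≠ 0 := by exact_mod_cast (show M ≠ 0 by omega)
  have hsin : sin (π / M * m / 2) ≠ 0 := by
    have := sin_pi_div_mul_half_ne_zero (M := M) (j := m) (by omega) (by rw [Nat.abs_cast]; omega)
    exact_mod_cast this
  have h := two_mul_sin_half_mul_sum_sin (π / M * m) M
  rw [show π / M * m * M = m * π by field_simp, cos_nat_mul_pi] at h
  rw [eq_div_iff (mul_ne_zero two_ne_zero hsin), ← h]
  ring

section modDstEntry

variable {M k m : ℕ}

theorem modDstEntry_zero (n : ℕ) : modDstEntry M 0 n = √(1 / M) := if_pos rfl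

theorem modDstEntry_of_ne_zero (hk : k ≠ 0) (n : ℕ) :
    modDstEntry M k n = √(2 / M) * sin (π / M * k * (n + 1 / 2)) := if_neg hk

theorem sum_modDstEntry_zero_mul_self (hM : M ≠ 0) :
    ∑ n ∈ range M, modDstEntry M 0 n * modDstEntry M 0 n = 1 := by
  simp only [modDstEntry_zero, mul_self_sqrt (by positivity : (0 : ℝ) ≤ 1 / M), sum_const,
    card_range, nsmul_eq_mul]
  field_simp

theorem modDstEntry_mul_modDstEntry (hk : k ≠ 0) (hm : m ≠ 0) (n : ℕ) :
    modDstEntry M k n * modDstEntry M m n =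
      (cos (π / M * ((k : ℤ) - m : ℤ) * (n + 1 / 2)) -
        cos (π / M * ((k : ℤ) + m : ℤ) * (n + 1 / 2))) / M := by
  rw [modDstEntry_of_ne_zero hk, modDstEntry_of_ne_zero hm]
  calc √(2 / M) * sin (π / M * k * (n + 1 / 2)) * (√(2 / M) * sin (π / M * m * (n + 1 / 2)))
      = (√(2 / M) * √(2 / M)) / 2 *
          (2 * sin (π / M * k * (n + 1 / 2)) * sin (π / M * m * (n + 1 / 2))) := by ring
    _ = _ := by
      rw [mul_self_sqrt (by positivity), two_mul_sin_mul_sin]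
      push_cast
      ring_nf

theorem sum_modDstEntry_mul (hk0 : k ≠ 0) (hm0 : m ≠ 0) (hk : k < M) (hm : m < M) :
    ∑ n ∈ range M, modDstEntry M k n * modDstEntry M m n = if k = m then 1 else 0 := by
  have hM : (M : ℝ) ≠ 0 := by exact_mod_cast (show M ≠ 0 by omega)
  have hsum : ∑ n ∈ range M, cos (π / M * ((k : ℤ) + m : ℤ) * (n + 1 / 2)) = 0 :=
    sum_cos_pi_div_mul_int (by omega) (by rw [abs_lt]; omega)
  simp only [modDstEntry_mul_modDstEntry hk0 hm0, ← sum_div, sum_sub_distrib, hsum, sub_zero]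
  split_ifs with hkm
  · simp [hkm, hM]
  · rw [sum_cos_pi_div_mul_int (by omega) (by rw [abs_lt]; omega), zero_div]

theorem sum_modDstEntry_zero_mul (hm0 : m ≠ 0) (hm : m < 2 * M) :
    ∑ n ∈ range M, modDstEntry M 0 n * modDstEntry M m n =
      √2 / M * ((1 - (-1) ^ m) / (2 * sin (π / M * m / 2))) := by
  have hcoeff : √(1 / M) * √(2 / M) = √2 / M := by
    rw [← sqrt_mul (by positivity), show (1 / M : ℝ) * (2 / M) = 2 / M ^ 2 by ring,
      sqrt_div' _ (by positivity), sqrt_sq (by positivity)]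
  simp only [modDstEntry_zero, modDstEntry_of_ne_zero hm0, ← mul_assoc, hcoeff, ← mul_sum,
    sum_sin_pi_div_mul_nat hm0 hm]

theorem sum_modDstEntry_zero_mul_of_even (hm0 : m ≠ 0) (hm : m < 2 * M) (he : Even m) :
    ∑ n ∈ range M, modDstEntry M 0 n * modDstEntry M m n = 0 := by
  rw [sum_modDstEntry_zero_mul hm0 hm, he.neg_one_pow, sub_self, zero_div, mul_zero]

end modDstEntry

theorem modDst_gram_general (M : ℕ) :
    (∀ k < M, ∑ n ∈ Finset.range M, modDstEntry M k n * modDstEntry M k n = 1) ∧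
    (∀ ℓ < M / 2, ∑ n ∈ Finset.range M, modDstEntry M 0 n * modDstEntry M (2 * ℓ + 1) n =
        Real.sqrt 2 / (M * Real.sin (Real.pi / (2 * M) * (2 * ℓ + 1)))) ∧
    (∀ k < M, ∀ m < M, k ≠ m → ¬(k = 0 ∧ Odd m) → ¬(m = 0 ∧ Odd k) →
        ∑ n ∈ Finset.range M, modDstEntry M k n * modDstEntry M m n = 0) := by
  refine ⟨fun k hk => ?_, fun ℓ hℓ => ?_, fun k hk m hm hkm hk0m hm0k => ?_⟩
  · rcases eq_or_ne k 0 with rfl | hk0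
    · exact sum_modDstEntry_zero_mul_self (by omega)
    · simpa using sum_modDstEntry_mul hk0 hk0 hk hk
  · rw [sum_modDstEntry_zero_mul (by omega) (by omega), Odd.neg_one_pow ⟨ℓ, rfl⟩]
    push_cast
    ring_nf
  · rcases eq_or_ne k 0 with rfl | hk0
    · exact sum_modDstEntry_zero_mul_of_even hkm.symm (by omega)
        (Nat.not_odd_iff_even.mp fun h => hk0m ⟨rfl, h⟩)
    rcases eq_or_ne m 0 with rfl | hm0
    · simp_rw [mul_comm (modDstEntry M k _)]
      exact sum_modDstEntry_zero_mul_of_even hk0 (by omega)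
        (Nat.not_odd_iff_even.mp fun h => hm0k ⟨rfl, h⟩)
    · simpa [hkm] using sum_modDstEntry_mul hk0 hm0 hk hm

/-- Lemma 1, part 1: the Gram matrix `S Sᵀ` of the modified DST. -/
theorem modDst_gram (M : ℕ) (hM : 2 ≤ M) (hEven : Even M) :
    (∀ k < M, ∑ n ∈ Finset.range M, modDstEntry M k n * modDstEntry M k n = 1) ∧
    (∀ ℓ < M / 2, ∑ n ∈ Finset.range M, modDstEntry M 0 n * modDstEntry M (2 * ℓ + 1) n =
        Real.sqrt 2 / (M * Real.sin (Real.pi / (2 * M) * (2 * ℓ + 1)))) ∧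
    (∀ k < M, ∀ m < M, k ≠ m → ¬(k = 0 ∧ Odd m) → ¬(m = 0 ∧ Odd k) →
        ∑ n ∈ Finset.range M, modDstEntry M k n * modDstEntry M m n = 0) :=
  modDst_gram_general M
end

section
/- Let M ≥ 2 be an even integer and let s_0, …, s_{M−1} ∈ ℝ^M be the rows of the modified DST matrix S. Then ∑_{ℓ=0}^{M/2−1} ⟨s_0, s_{2ℓ+1}⟩² = 1. -/
open Finset Real

theorem two_mul_sin_mul_sum_range_cos_odd_mul (θ : ℝ) (N : ℕ) :
    2 * sin θ * ∑ ℓ ∈ range N, cos ((2 * ℓ + 1) * θ) = sin (2 * N * θ) := by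
  induction N with
  | zero => simp
  | succ N ih =>
    rw [sum_range_succ, mul_add, ih, two_mul_sin_mul_cos,
      show θ - (2 * N + 1) * θ = -(2 * N * θ) by ring, sin_neg]
    push_cast
    ring_nf

noncomputable def oddCosSum (N : ℕ) (j : ℤ) : ℝ :=
  ∑ ℓ ∈ range N, cos ((2 * ℓ + 1) * (π * j / (2 * N)))

theorem oddCosSum_eq_zero {N : ℕ} {j : ℤ} (hj : ¬ (2 * N : ℤ) ∣ j) : oddCosSum N j = 0 := by
  rcases eq_or_ne N 0 with rfl | hN
  · simp [oddCosSum]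
  have hsin : sin (π * j / (2 * N)) ≠ 0 := by
    rw [Ne, sin_eq_zero_iff]
    rintro ⟨c, hc⟩
    refine hj ⟨c, ?_⟩
    field_simp at hc
    exact_mod_cast (by rw [← hc]; ring : (j : ℝ) = 2 * N * c)
  have h := two_mul_sin_mul_sum_range_cos_odd_mul (π * j / (2 * N)) N
  rw [show 2 * N * (π * j / (2 * N)) = j * π by field_simp, sin_int_mul_pi] at h
  simpa [oddCosSum, hsin] using h

theorem oddCosSum_of_abs_lt {N : ℕ} {j : ℤ} (hj : |j| < 2 * N) :
    oddCosSum N j = if j = 0 then (N : ℝ) else 0 := by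
  split_ifs with h0
  · simp [oddCosSum, h0]
  · exact oddCosSum_eq_zero fun hdvd => h0 (Int.eq_zero_of_abs_lt_dvd hdvd hj)

theorem oddCosSum_add_two_mul {N : ℕ} (hN : N ≠ 0) (j : ℤ) :
    oddCosSum N (j + 2 * N) = -oddCosSum N j := by
  rw [oddCosSum, oddCosSum, ← sum_neg_distrib]
  refine sum_congr rfl fun ℓ _ => ?_
  have hangle : (2 * ℓ + 1) * (π * ((j + 2 * N : ℤ) : ℝ) / (2 * N)) =
      (2 * ℓ + 1) * (π * j / (2 * N)) + ℓ * (2 * π) + π := by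
    push_cast
    field_simp
    ring
  rw [hangle, cos_add_pi, cos_add_nat_mul_two_pi]

theorem sum_range_sin_mul_sin {N n m : ℕ} (hn : n < 2 * N) (hm : m < 2 * N) :
    ∑ ℓ ∈ range N, sin (π / (2 * N) * (2 * ℓ + 1) * (n + 1 / 2)) *
        sin (π / (2 * N) * (2 * ℓ + 1) * (m + 1 / 2)) =
      N / 2 * ((if n = m then 1 else 0) + if n + m + 1 = 2 * N then 1 else 0) := by
  have hN : N ≠ 0 := by omega
  -- the second angle is shifted by `2N` so that its index lies in `(-2N, 2N)`
  have hprod : ∀ ℓ : ℕ, sin (π / (2 * N) * (2 * ℓ + 1) * (n + 1 / 2)) *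
      sin (π / (2 * N) * (2 * ℓ + 1) * (m + 1 / 2)) =
        (cos ((2 * ℓ + 1) * (π * ((n - m : ℤ) : ℝ) / (2 * N))) -
          cos ((2 * ℓ + 1) * (π * ((n + m + 1 - 2 * N + 2 * N : ℤ) : ℝ) / (2 * N)))) / 2 := by
    intro ℓ
    rw [eq_div_iff two_ne_zero, mul_comm, ← mul_assoc, two_mul_sin_mul_sin]
    push_cast
    ring_nf
  rw [sum_congr rfl fun ℓ _ => hprod ℓ, ← sum_div, sum_sub_distrib]
  change (oddCosSum N _ - oddCosSum N _) / 2 = _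
  rw [oddCosSum_add_two_mul hN, oddCosSum_of_abs_lt (by rw [abs_lt]; omega),
    oddCosSum_of_abs_lt (by rw [abs_lt]; omega)]
  simp only [sub_eq_zero, Int.natCast_inj]
  split_ifs <;> first | omega | ring

theorem sum_range_sq_sum_range_sin (N : ℕ) :
    ∑ ℓ ∈ range N, (∑ n ∈ range (2 * N), sin (π / (2 * N) * (2 * ℓ + 1) * (n + 1 / 2))) ^ 2 =
      2 * N ^ 2 := by
  have hrow : ∀ n ∈ range (2 * N), ∑ m ∈ range (2 * N),
      (N / 2 * ((if n = m then 1 else 0) + if n + m + 1 = 2 * N then 1 else 0) : ℝ) = N := by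
    intro n hn
    rw [mem_range] at hn
    have hpartner : ∀ m, n + m + 1 = 2 * N ↔ 2 * N - 1 - n = m := fun m => by omega
    simp only [hpartner, ← mul_sum, sum_add_distrib, sum_ite_eq, mem_range]
    rw [if_pos hn, if_pos (by omega)]
    ring
  calc ∑ ℓ ∈ range N, (∑ n ∈ range (2 * N), sin (π / (2 * N) * (2 * ℓ + 1) * (n + 1 / 2))) ^ 2
      = ∑ n ∈ range (2 * N), ∑ m ∈ range (2 * N), ∑ ℓ ∈ range N,
          sin (π / (2 * N) * (2 * ℓ + 1) * (n + 1 / 2)) *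
            sin (π / (2 * N) * (2 * ℓ + 1) * (m + 1 / 2)) := by
        simp_rw [sq, sum_mul_sum]
        rw [sum_comm]
        exact sum_congr rfl fun n _ => sum_comm
    _ = ∑ n ∈ range (2 * N), (N : ℝ) := by
        refine sum_congr rfl fun n hn => ?_
        refine (sum_congr rfl fun m hm => ?_).trans (hrow n hn)
        exact sum_range_sin_mul_sin (mem_range.mp hn) (mem_range.mp hm)
    _ = 2 * N ^ 2 := by
        rw [sum_const, card_range, nsmul_eq_mul]
        push_cast
        ring

theorem modDstEntry_zero_mul {M k : ℕ} (hk : k ≠ 0) (n : ℕ) :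
    modDstEntry M 0 n * modDstEntry M k n =
      √(1 / M) * √(2 / M) * sin (π / M * k * (n + 1 / 2)) := by
  simp only [modDstEntry, if_pos, if_neg hk]
  ring

/-- Lemma 1, part 2: `∑_{ℓ=0}^{M/2−1} ⟨s₀, s_{2ℓ+1}⟩² = 1`. -/
theorem modDst_sum_sq_inner (M : ℕ) (hM : 2 ≤ M) (hEven : Even M) :
    ∑ ℓ ∈ Finset.range (M / 2),
        (∑ n ∈ Finset.range M, modDstEntry M 0 n * modDstEntry M (2 * ℓ + 1) n) ^ 2 = 1 := by
  obtain ⟨N, rfl⟩ := hEven.two_dvd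
  have hN : (N : ℝ) ≠ 0 := by exact_mod_cast (by omega : N ≠ 0)
  simp_rw [Nat.mul_div_cancel_left N two_pos, modDstEntry_zero_mul (Nat.succ_ne_zero _),
    ← mul_sum, mul_pow, ← mul_sum]
  push_cast
  rw [sum_range_sq_sum_range_sin, sq_sqrt (by positivity), sq_sqrt (by positivity)]
  field_simp
end

section
/- Let M ≥ 2 be an even integer. Then for every n ∈ {0, …, M−1}: ∑_{ℓ=0}^{M/2−1} sin((π/M)(2ℓ+1)(n+1/2)) / sin((π/(2M))(2ℓ+1)) = M/2. Equivalently, the constant vector (1/√M, …, 1/√M)ᵀ lies in the span of the odd-indexed DST rows s_1, s_3, …, s_{M−1}, with expansion coefficients ⟨s_0, s_{2ℓ+1}⟩ = √2/(M·sin((π/(2M))(2ℓ+1))). -/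
lemma sumcos (θ : ℝ) (N : ℕ) :
    2 * Real.sin θ * ∑ ℓ ∈ Finset.range N, Real.cos ((2 * ℓ + 1) * θ) =
      Real.sin (2 * N * θ) := by
  induction N with
  | zero => simp
  | succ n ih =>
    rw [Finset.sum_range_succ, mul_add, ih]
    have h := Real.sin_sub_sin (2 * (n + 1 : ℕ) * θ) (2 * n * θ)
    push_cast at h ⊢
    have h1 : (2 * (n + 1 : ℝ) * θ - 2 * n * θ) / 2 = θ := by ring
    have h2 : (2 * (n + 1 : ℝ) * θ + 2 * n * θ) / 2 = (2 * n + 1) * θ := by ring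
    rw [h1, h2] at h
    linarith

lemma dirich (B : ℝ) (n : ℕ) :
    Real.sin ((2 * n + 1) * B) =
      Real.sin B * (1 + 2 * ∑ j ∈ Finset.range n, Real.cos (2 * (j + 1) * B)) := by
  induction n with
  | zero => simp
  | succ m ih =>
    rw [Finset.sum_range_succ]
    have h := Real.sin_sub_sin ((2 * (m + 1 : ℕ) + 1) * B) ((2 * m + 1) * B)
    push_cast at h ⊢
    have h1 : ((2 * (m + 1 : ℝ) + 1) * B - (2 * m + 1) * B) / 2 = B := by ring
    have h2 : ((2 * (m + 1 : ℝ) + 1) * B + (2 * m + 1) * B) / 2 = 2 * (m + 1) * B := by ring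
    rw [h1, h2] at h
    push_cast at ih
    linarith



/-- The linear-dependence identity from the proof of Proposition 2:
for every `n < M`, `∑_{ℓ=0}^{M/2−1} sin((π/M)(2ℓ+1)(n+1/2)) / sin((π/(2M))(2ℓ+1)) = M/2`;
equivalently, the constant row `s₀` lies in the span of the odd-indexed DST rows with
coefficients `⟨s₀, s_{2ℓ+1}⟩ = √2/(M·sin((π/(2M))(2ℓ+1)))`. -/
theorem modDst_constant_in_odd_span (M : ℕ) (hM : 2 ≤ M) (hEven : Even M) :
    (∀ n < M, ∑ ℓ ∈ Finset.range (M / 2),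
        Real.sin (Real.pi / M * (2 * ℓ + 1) * (n + 1 / 2)) /
          Real.sin (Real.pi / (2 * M) * (2 * ℓ + 1)) = M / 2) ∧
    (∀ n < M, modDstEntry M 0 n =
        ∑ ℓ ∈ Finset.range (M / 2),
          Real.sqrt 2 / (M * Real.sin (Real.pi / (2 * M) * (2 * ℓ + 1))) *
            modDstEntry M (2 * ℓ + 1) n) := by
  have hM0 : (0 : ℝ) < M := by positivity
  have hMhalf : (2 * (M / 2) : ℕ) = M := Nat.two_mul_div_two_of_even hEven
  -- positivity of sin B_ℓ for ℓ < M/2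
  have hsinB : ∀ ℓ < M / 2, 0 < Real.sin (Real.pi / (2 * M) * (2 * ℓ + 1)) := by
    intro ℓ hℓ
    apply Real.sin_pos_of_pos_of_lt_pi
    · positivity
    · have h1 : (2 * ℓ + 1 : ℝ) < 2 * M := by
        have : 2 * ℓ + 1 < 2 * M := by omega
        exact_mod_cast this
      calc Real.pi / (2 * M) * (2 * ℓ + 1) < Real.pi / (2 * M) * (2 * M) := by
            apply mul_lt_mul_of_pos_left h1; positivity
        _ = Real.pi := by field_simp
  -- key: each ratio equals 1 + 2 ∑_{j<n} cos(2(j+1)B_ℓ)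
  have key : ∀ n : ℕ, ∀ ℓ < M / 2,
      Real.sin (Real.pi / M * (2 * ℓ + 1) * (n + 1 / 2)) /
          Real.sin (Real.pi / (2 * M) * (2 * ℓ + 1)) =
        1 + 2 * ∑ j ∈ Finset.range n,
          Real.cos (2 * (j + 1) * (Real.pi / (2 * M) * (2 * ℓ + 1))) := by
    intro n ℓ hℓ
    have hA : Real.pi / M * (2 * ℓ + 1) * (n + 1 / 2) =
        (2 * n + 1) * (Real.pi / (2 * M) * (2 * ℓ + 1)) := by ring
    rw [hA, dirich, mul_comm, mul_div_cancel_right₀ _ (ne_of_gt (hsinB ℓ hℓ))]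
  -- inner cosine sums vanish
  have hcos : ∀ j : ℕ, j + 1 < M →
      ∑ ℓ ∈ Finset.range (M / 2),
        Real.cos (2 * (j + 1) * (Real.pi / (2 * M) * (2 * ℓ + 1))) = 0 := by
    intro j hj
    have hθ : ∀ ℓ : ℕ, 2 * (j + 1 : ℝ) * (Real.pi / (2 * M) * (2 * ℓ + 1)) =
        (2 * ℓ + 1) * ((j + 1) * Real.pi / M) := by intro ℓ; ring
    have hs := sumcos ((j + 1) * Real.pi / M) (M / 2)
    have hsinθ : 0 < Real.sin ((j + 1) * Real.pi / M) := by
      apply Real.sin_pos_of_pos_of_lt_pi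
      · positivity
      · have h1 : (j + 1 : ℝ) < M := by exact_mod_cast hj
        rw [div_lt_iff₀ hM0]
        nlinarith [Real.pi_pos]
    simp_rw [hθ]
    have hMr : ((M / 2 : ℕ) : ℝ) = (M : ℝ) / 2 := by
      have : (2 * (M / 2) : ℕ) = (M : ℕ) := hMhalf
      have h2 : 2 * ((M / 2 : ℕ) : ℝ) = (M : ℝ) := by exact_mod_cast this
      linarith
    have hzero : Real.sin (2 * ((M / 2 : ℕ) : ℝ) * ((j + 1) * Real.pi / M)) = 0 := by
      rw [hMr, show 2 * ((M : ℝ) / 2) * ((j + 1) * Real.pi / M) = ((j + 1 : ℕ) : ℝ) * Real.pi by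
        push_cast; field_simp]
      exact Real.sin_nat_mul_pi (j + 1)
    rw [hzero] at hs
    have h2s : 2 * Real.sin ((j + 1) * Real.pi / M) ≠ 0 := by positivity
    exact (mul_eq_zero.mp hs).resolve_left h2s
  -- part 1
  have part1 : ∀ n < M, ∑ ℓ ∈ Finset.range (M / 2),
      Real.sin (Real.pi / M * (2 * ℓ + 1) * (n + 1 / 2)) /
        Real.sin (Real.pi / (2 * M) * (2 * ℓ + 1)) = M / 2 := by
    intro n hn
    rw [Finset.sum_congr rfl fun ℓ hℓ => key n ℓ (Finset.mem_range.mp hℓ)]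
    rw [Finset.sum_add_distrib, Finset.sum_const, Finset.card_range]
    rw [← Finset.mul_sum, Finset.sum_comm]
    have : ∀ j ∈ Finset.range n, ∑ ℓ ∈ Finset.range (M / 2),
        Real.cos (2 * (j + 1) * (Real.pi / (2 * M) * (2 * ℓ + 1))) = 0 := by
      intro j hj
      exact hcos j (by have := Finset.mem_range.mp hj; omega)
    rw [Finset.sum_congr rfl this, Finset.sum_const_zero, mul_zero, add_zero,
      nsmul_eq_mul, mul_one]
    have hMr : ((M / 2 : ℕ) : ℝ) = (M : ℝ) / 2 := by
      have h2 : 2 * ((M / 2 : ℕ) : ℝ) = (M : ℝ) := by exact_mod_cast hMhalf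
      linarith
    rw [hMr]
  refine ⟨part1, ?_⟩
  intro n hn
  have hrw : ∀ ℓ ∈ Finset.range (M / 2),
      Real.sqrt 2 / (M * Real.sin (Real.pi / (2 * M) * (2 * ℓ + 1))) *
        modDstEntry M (2 * ℓ + 1) n =
      Real.sqrt 2 * Real.sqrt (2 / M) / M *
        (Real.sin (Real.pi / M * (2 * ℓ + 1) * (n + 1 / 2)) /
          Real.sin (Real.pi / (2 * M) * (2 * ℓ + 1))) := by
    intro ℓ hℓ
    simp only [modDstEntry, Nat.succ_ne_zero, if_neg (by omega : ¬ (2 * ℓ + 1 = 0))]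
    push_cast
    ring
  rw [Finset.sum_congr rfl hrw, ← Finset.mul_sum, part1 n hn]
  have hfin : Real.sqrt 2 * Real.sqrt (2 / M) / M * (M / 2) = Real.sqrt (1 / M) := by
    rw [show (2 / (M : ℝ)) = 2 * (1 / M) by ring,
      Real.sqrt_mul (by norm_num : (0:ℝ) ≤ 2)]
    rw [show Real.sqrt 2 * (Real.sqrt 2 * Real.sqrt (1 / (M:ℝ))) / M * (M / 2)
        = Real.sqrt 2 * Real.sqrt 2 * Real.sqrt (1 / (M:ℝ)) / 2 * (M / M) by ring,
      div_self (ne_of_gt hM0), mul_one, Real.mul_self_sqrt (by norm_num : (0:ℝ) ≤ 2)]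
    ring
  rw [hfin]
  unfold modDstEntry
  rw [if_pos rfl]
end
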